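/- For l = 1 and μ ∈ {0, (1/2)α_1}, λ = (-3/2)Λ_0^c + μ is an admissible weight for A_2^{(2)}: (λ+ρ, α̃^∨) ∉ {0,-1,-2,...} for all positive real coroots α̃^∨, and the λ-integral real roots span the full rational span of the simple roots. -/
import Mathlib


noncomputable section

/-- The weight space of `A_2^{(2)}` over `ℚ`, with coordinates
(coefficient of `α₁`, coefficient of `δ`, coefficient of `Λ₀ᶜ`). -/
abbrev WtA2 := ℚ × ℚ × ℚ

/-- The bilinear form: `(α₁,α₁) = 1`, `(δ,Λ₀ᶜ) = 1`, all other pairings of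
basis vectors zero. -/
def formA2 (x y : WtA2) : ℚ := x.1 * y.1 + x.2.1 * y.2.2 + x.2.2 * y.2.1

/-- The real roots of `A_2^{(2)}`: short `±α₁ + mδ` and long `±2α₁ + (2m+1)δ`. -/
def realRootsA2 : Set WtA2 :=
  {r | (∃ s m : ℤ, (s = 1 ∨ s = -1) ∧ r = ((s : ℚ), (m : ℚ), 0)) ∨
       (∃ s m : ℤ, (s = 1 ∨ s = -1) ∧ r = (2 * (s : ℚ), 2 * (m : ℚ) + 1, 0))}

/-- The positive real roots of `A_2^{(2)}`. -/
def posRealRootsA2 : Set WtA2 :=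
  {r | (∃ s m : ℤ, (s = 1 ∨ s = -1) ∧ (1 ≤ m ∨ (m = 0 ∧ s = 1)) ∧
          r = ((s : ℚ), (m : ℚ), 0)) ∨
       (∃ s m : ℤ, (s = 1 ∨ s = -1) ∧ 0 ≤ m ∧
          r = (2 * (s : ℚ), 2 * (m : ℚ) + 1, 0))}

/-- The coroot pairing `(λ, α^∨) = (2/(α,α))(λ,α)`. -/
def corootPair (lam r : WtA2) : ℚ := 2 / formA2 r r * formA2 lam r

/-- for `l = 1` and `μ ∈ {0, (1/2)α₁}`, the weight
`λ = -(3/2)Λ₀ᶜ + μ` is admissible for `A_2^{(2)}`: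
`(λ+ρ, α̃^∨) ∉ {0,-1,-2,…}` for all positive real roots `α̃`, and the
`λ`-integral real roots `ℚ`-span the span of the simple roots
`α₀ = δ - 2α₁` and `α₁`. -/
theorem admissibility_l_eq_one (μ : WtA2) (hμ : μ = 0 ∨ μ = (1 / 2, 0, 0)) :
    (∀ r ∈ posRealRootsA2,
      ¬∃ z : ℤ, z ≤ 0 ∧ corootPair (μ + (0, 0, -(3 / 2)) + (1 / 2, 0, 3)) r = (z : ℚ)) ∧
    Submodule.span ℚ
        {r | r ∈ realRootsA2 ∧ ∃ z : ℤ, corootPair (μ + (0, 0, -(3 / 2))) r = (z : ℚ)} =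
      Submodule.span ℚ {((-2 : ℚ), (1 : ℚ), (0 : ℚ)), ((1 : ℚ), (0 : ℚ), (0 : ℚ))} := by
  constructor
  · rintro r (⟨s, m, hs, hm, rfl⟩ | ⟨s, m, hs, hm, rfl⟩) ⟨z, hz, hv⟩ <;>
      rcases hμ with rfl | rfl <;> rcases hs with rfl | rfl <;>
      norm_num [corootPair, formA2] at hv
    · have h : (1 + 3 * m : ℤ) = z := by
        exact_mod_cast show ((1 + 3 * m : ℤ) : ℚ) = ((z : ℤ) : ℚ) by push_cast; linarith
      omega
    · have h : (-1 + 3 * m : ℤ) = z := by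
        exact_mod_cast show ((-1 + 3 * m : ℤ) : ℚ) = ((z : ℤ) : ℚ) by push_cast; linarith
      omega
    · have h : (2 + 3 * m : ℤ) = z := by
        exact_mod_cast show ((2 + 3 * m : ℤ) : ℚ) = ((z : ℤ) : ℚ) by push_cast; linarith
      omega
    · have h : (-2 + 3 * m : ℤ) = z := by
        exact_mod_cast show ((-2 + 3 * m : ℤ) : ℚ) = ((z : ℤ) : ℚ) by push_cast; linarith
      omega
    · have h : (6 * m + 5 : ℤ) = 4 * z := by
        exact_mod_cast show ((6 * m + 5 : ℤ) : ℚ) = ((4 * z : ℤ) : ℚ) by push_cast; linarith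
      omega
    · have h : (6 * m + 1 : ℤ) = 4 * z := by
        exact_mod_cast show ((6 * m + 1 : ℤ) : ℚ) = ((4 * z : ℤ) : ℚ) by push_cast; linarith
      omega
    · have h : (6 * m + 7 : ℤ) = 4 * z := by
        exact_mod_cast show ((6 * m + 7 : ℤ) : ℚ) = ((4 * z : ℤ) : ℚ) by push_cast; linarith
      omega
    · have h : (6 * m - 1 : ℤ) = 4 * z := by
        exact_mod_cast show ((6 * m - 1 : ℤ) : ℚ) = ((4 * z : ℤ) : ℚ) by push_cast; linarith
      omega
  · apply le_antisymm
    · rw [Submodule.span_le]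
      rintro r ⟨(⟨s, m, hs, rfl⟩ | ⟨s, m, hs, rfl⟩), -⟩ <;>
        rw [SetLike.mem_coe, Submodule.mem_span_pair]
      · exact ⟨(m : ℚ), (s : ℚ) + 2 * m, by
          simp [Prod.ext_iff, Prod.smul_def, smul_eq_mul]; ring⟩
      · exact ⟨2 * (m : ℚ) + 1, 2 * (s : ℚ) + 2 * (2 * m + 1), by
          simp [Prod.ext_iff, Prod.smul_def, smul_eq_mul]; ring⟩
    · rw [Submodule.span_le, Set.insert_subset_iff, Set.singleton_subset_iff]
      have h1 : ((1 : ℚ), (0 : ℚ), (0 : ℚ)) ∈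
          Submodule.span ℚ {r | r ∈ realRootsA2 ∧
            ∃ z : ℤ, corootPair (μ + (0, 0, -(3 / 2))) r = (z : ℚ)} := by
        apply Submodule.subset_span
        refine ⟨Or.inl ⟨1, 0, Or.inl rfl, by norm_num⟩, ?_⟩
        rcases hμ with rfl | rfl
        · exact ⟨0, by norm_num [corootPair, formA2]⟩
        · exact ⟨1, by norm_num [corootPair, formA2]⟩
      have h2 : ((1 : ℚ), (1 : ℚ), (0 : ℚ)) ∈
          Submodule.span ℚ {r | r ∈ realRootsA2 ∧
            ∃ z : ℤ, corootPair (μ + (0, 0, -(3 / 2))) r = (z : ℚ)} := by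
        apply Submodule.subset_span
        refine ⟨Or.inl ⟨1, 1, Or.inl rfl, by norm_num⟩, ?_⟩
        rcases hμ with rfl | rfl
        · exact ⟨-3, by norm_num [corootPair, formA2]⟩
        · exact ⟨-2, by norm_num [corootPair, formA2]⟩
      constructor
      · have := Submodule.sub_mem _ h2 (Submodule.smul_mem _ (3 : ℚ) h1)
        convert this using 1
        norm_num [Prod.ext_iff, Prod.smul_def, smul_eq_mul]
      · exact h1
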